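/- arXiv:2407.19748 — 2 statements merged into one kernel-verified Lean document; each statement's English description precedes it below -/
import Mathlib

section
/- For every E ∈ H_0(curl,Ω), the commuting property Π̃_k^{0,RT}(curl E) = curl(Π_k^N E) holds. -/
/-!
Both `proj (curl E)` and `curl (PiN E)` lie in the divergence-free Raviart–Thomas space, which by
the discrete exact sequence is exactly the image of the Nédélec space under `curl`. The defining
orthogonality of `proj` and the Galerkin orthogonality of `PiN` both say that `curl E` minus the
candidate is orthogonal to that space, and an element with this property is unique.
-/

open RealInnerProductSpace

namespace Submodule

theorem map_eq_inf_ker_of_exact {R M N P : Type*} [Semiring R] [AddCommMonoid M]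
    [AddCommMonoid N] [AddCommMonoid P] [Module R M] [Module R N] [Module R P]
    {f : M →ₗ[R] N} {g : N →ₗ[R] P} {A : Submodule R M} {B : Submodule R N}
    (hmap : ∀ x ∈ A, f x ∈ B ∧ g (f x) = 0) (hsurj : ∀ y ∈ B, g y = 0 → ∃ x ∈ A, f x = y) :
    A.map f = B ⊓ LinearMap.ker g := by
  ext y
  constructor
  · rintro ⟨x, hx, rfl⟩
    exact hmap x hx
  · rintro ⟨hyB, hyg⟩
    exact hsurj y hyB hyg

variable {𝕜 E : Type*} [RCLike 𝕜] [NormedAddCommGroup E] [InnerProductSpace 𝕜 E]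

theorem eq_of_mem_of_sub_mem_orthogonal {K : Submodule 𝕜 E} {x a b : E} (ha : a ∈ K)
    (hb : b ∈ K) (hxa : x - a ∈ Kᗮ) (hxb : x - b ∈ Kᗮ) : a = b := by
  have hK : a - b ∈ K ⊓ Kᗮ := ⟨K.sub_mem ha hb, by simpa using Kᗮ.sub_mem hxb hxa⟩
  rw [K.inf_orthogonal_eq_bot, mem_bot] at hK
  exact sub_eq_zero.mp hK

end Submodule

theorem stmt9_general
    {V W Z : Type*} [NormedAddCommGroup V] [InnerProductSpace ℝ V]
    [NormedAddCommGroup W] [InnerProductSpace ℝ W]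
    [AddCommGroup Z] [Module ℝ Z]
    (curl : V →ₗ[ℝ] V) (grad : W →ₗ[ℝ] V) (dvg : V →ₗ[ℝ] Z)
    (Hcurl0 : Set V)
    (Vhc Vhd : Submodule ℝ V) (Wh : Submodule ℝ W)
    (hseq2 : ∀ Fh ∈ Vhc, curl Fh ∈ Vhd ∧ dvg (curl Fh) = 0)
    (hseq3 : ∀ Ch ∈ Vhd, dvg Ch = 0 → ∃ Fh ∈ Vhc, curl Fh = Ch)
    (PiN : V → V)
    (hPiN : ∀ E ∈ Hcurl0, PiN E ∈ Vhc ∧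
      (∀ Fh ∈ Vhc, ⟪curl (E - PiN E), curl Fh⟫ = 0) ∧
      (∀ Qh ∈ Wh, ⟪E - PiN E, grad Qh⟫ = 0))
    (proj : V → V)
    (hproj : ∀ B : V, (proj B ∈ Vhd ∧ dvg (proj B) = 0) ∧
      ∀ Ch ∈ Vhd, dvg Ch = 0 → ⟪B - proj B, Ch⟫ = 0) :
    ∀ E ∈ Hcurl0, proj (curl E) = curl (PiN E) := by
  intro E hE
  obtain ⟨hPiN_mem, hGalerkin, -⟩ := hPiN E hE
  have hrange : Vhc.map curl = Vhd ⊓ LinearMap.ker dvg :=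
    Submodule.map_eq_inf_ker_of_exact hseq2 hseq3
  have hproj_orth : curl E - proj (curl E) ∈ (Vhc.map curl)ᗮ := by
    rw [hrange, Submodule.mem_orthogonal']
    rintro C ⟨hCd, hCdvg⟩
    exact (hproj _).2 C hCd hCdvg
  have hPiN_orth : curl E - curl (PiN E) ∈ (Vhc.map curl)ᗮ := by
    rw [Submodule.mem_orthogonal']
    rintro _ ⟨F, hF, rfl⟩
    simpa only [map_sub] using hGalerkin F hF
  refine Submodule.eq_of_mem_of_sub_mem_orthogonal ?_ (Submodule.mem_map_of_mem hPiN_mem)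
    hproj_orth hPiN_orth
  rw [hrange]
  exact (hproj _).1

theorem stmt9
    {V W Z : Type*} [NormedAddCommGroup V] [InnerProductSpace ℝ V]
    [NormedAddCommGroup W] [InnerProductSpace ℝ W]
    [AddCommGroup Z] [Module ℝ Z]
    (curl : V →ₗ[ℝ] V) (grad : W →ₗ[ℝ] V) (dvg : V →ₗ[ℝ] Z)
    (Hcurl0 : Set V)
    (Vhc Vhd : Submodule ℝ V) (Wh : Submodule ℝ W)
    (hseq1 : ∀ Q ∈ Wh, grad Q ∈ Vhc)
    (hseq2 : ∀ Fh ∈ Vhc, curl Fh ∈ Vhd ∧ dvg (curl Fh) = 0)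
    (hseq3 : ∀ Ch ∈ Vhd, dvg Ch = 0 → ∃ Fh ∈ Vhc, curl Fh = Ch)
    (PiN : V → V)
    (hPiN : ∀ E ∈ Hcurl0, PiN E ∈ Vhc ∧
      (∀ Fh ∈ Vhc, ⟪curl (E - PiN E), curl Fh⟫ = 0) ∧
      (∀ Qh ∈ Wh, ⟪E - PiN E, grad Qh⟫ = 0))
    (proj : V → V)
    (hproj : ∀ B : V, (proj B ∈ Vhd ∧ dvg (proj B) = 0) ∧
      ∀ Ch ∈ Vhd, dvg Ch = 0 → ⟪B - proj B, Ch⟫ = 0) :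
    ∀ E ∈ Hcurl0, proj (curl E) = curl (PiN E) :=
  stmt9_general curl grad dvg Hcurl0 Vhc Vhd Wh hseq2 hseq3 PiN hPiN proj hproj
end

section
/- Let (u_h, ω_h, j_h, E_h, H_h, B_h, P_h) solve the semi-discrete seven-field scheme with initial magnetic data B_h⁰ = Π̃_k^{0,RT} B⁰. Then ∂_t B_h = −curl E_h holds strongly, and div B_h(·,t) = 0 for all t ∈ [0,T]. -/
/-!
The discrete Faraday law tests `B_h' + curl E_h` against the Raviart–Thomas space, and this field
lies in the closure of that space, since `B_h` takes values there and `curl` maps Nédélec into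
Raviart–Thomas fields; a vector in the closure of a subspace and orthogonal to it vanishes.
So `B_h' = -curl E_h` is a divergence-free Raviart–Thomas field, and `B_h(t)` stays in the
closure of the divergence-free Raviart–Thomas space, where `B_h(0)` starts. As `B_h(t)` minus its
projection lies in that closure and is orthogonal to the space, `B_h(t)` equals its projection,
which is divergence free.
-/

open RealInnerProductSpace Set

section MeanValue

variable {E : Type*} [NormedAddCommGroup E] [NormedSpace ℝ E]

theorem constant_of_hasDerivAt_zero_Ioc {f : ℝ → E} {a b : ℝ}
    (hcont : ContinuousOn f (Icc a b)) (hderiv : ∀ x ∈ Ioc a b, HasDerivAt f 0 x) :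
    ∀ x ∈ Icc a b, f x = f a := by
  -- reverse time to turn the derivative on `(a, b]` into a right derivative on `[-b, -a)`
  have hrev : ∀ y ∈ Icc (-b) (-a), f (-y) = f b := by
    have hrevcont : ContinuousOn (fun y => f (-y)) (Icc (-b) (-a)) :=
      hcont.comp continuous_neg.continuousOn fun y hy => ⟨le_neg.1 hy.2, neg_le.1 hy.1⟩
    have := constant_of_has_deriv_right_zero hrevcont fun y hy => by
      simpa [Function.comp_def] using ((hderiv (-y) ⟨lt_neg.1 hy.2, neg_le.1 hy.1⟩).scomp y
        (hasDerivAt_neg y)).hasDerivWithinAt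
    simpa using this
  intro x hx
  have hab : a ≤ b := hx.1.trans hx.2
  rw [← neg_neg x, ← neg_neg a, hrev _ ⟨neg_le_neg hx.2, neg_le_neg hx.1⟩,
    hrev _ ⟨neg_le_neg hab, le_rfl⟩]

namespace Submodule

variable {S : Submodule ℝ E} {f f' : ℝ → E}

theorem mem_of_hasDerivWithinAt (hS : IsClosed (S : Set E)) {s : Set ℝ} {x : ℝ} {v : E}
    (hf : HasDerivWithinAt f v s x) (hs : UniqueDiffWithinAt ℝ s x) (hx : x ∈ s)
    (hmem : ∀ y ∈ s, f y ∈ S) : v ∈ S := by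
  -- closedness of `S` makes `E ⧸ S` Hausdorff, so derivatives into it are unique
  have := hS
  have hq : HasDerivWithinAt (fun y => S.mkQL (f y)) (S.mkQL v) s x :=
    S.mkQL.hasFDerivAt.comp_hasDerivWithinAt x hf
  have hq0 : HasDerivWithinAt (fun y => S.mkQL (f y)) 0 s x :=
    (hasDerivWithinAt_const x s 0).congr_of_mem
      (fun y hy => (Quotient.mk_eq_zero S).2 (hmem y hy)) hx
  exact (Quotient.mk_eq_zero S).1 (hs.eq_deriv s hq hq0)

theorem mem_of_forall_hasDerivAt_mem (hS : IsClosed (S : Set E)) {a b : ℝ}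
    (hcont : ContinuousOn f (Icc a b)) (hderiv : ∀ x ∈ Ioc a b, HasDerivAt f (f' x) x)
    (hf' : ∀ x ∈ Ioc a b, f' x ∈ S) (ha : f a ∈ S) : ∀ x ∈ Icc a b, f x ∈ S := by
  have := hS
  have hconst := constant_of_hasDerivAt_zero_Ioc (S.mkQL.continuous.comp_continuousOn hcont)
    fun x hx => by
      simpa [(Quotient.mk_eq_zero S).2 (hf' x hx)] using
        S.mkQL.hasFDerivAt.comp_hasDerivAt x (hderiv x hx)
  exact fun x hx => (Quotient.mk_eq_zero S).1 ((hconst x hx).trans ((Quotient.mk_eq_zero S).2 ha))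

end Submodule

end MeanValue

theorem Submodule.eq_zero_of_mem_topologicalClosure_of_inner_eq_zero {V : Type*}
    [NormedAddCommGroup V] [InnerProductSpace ℝ V] {K : Submodule ℝ V} {x : V}
    (hx : x ∈ K.topologicalClosure) (horth : ∀ y ∈ K, ⟪x, y⟫ = 0) : x = 0 := by
  have hxorth : x ∈ K.topologicalClosureᗮ := by
    rw [orthogonal_closure, mem_orthogonal']
    exact horth
  exact Submodule.disjoint_def.1 K.topologicalClosure.orthogonal_disjoint x hx hxorth

theorem stmt12_general
    {V W Z : Type*} [NormedAddCommGroup V] [InnerProductSpace ℝ V]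
    [NormedAddCommGroup W] [InnerProductSpace ℝ W]
    [AddCommGroup Z] [Module ℝ Z]
    (curl : V →ₗ[ℝ] V) (dvg : V →ₗ[ℝ] Z)
    (Vhc Vhd : Submodule ℝ V) (Wh : Submodule ℝ W)
    (hseq : ∀ vh ∈ Vhc, curl vh ∈ Vhd)
    (hdivcurl : ∀ v : V, dvg (curl v) = 0)
    (proj : V → V)
    (hproj : ∀ Bv : V, (proj Bv ∈ Vhd ∧ dvg (proj Bv) = 0) ∧
      ∀ Ch ∈ Vhd, dvg Ch = 0 → ⟪Bv - proj Bv, Ch⟫ = 0)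
    (T : ℝ)
    (u ω j E H B : ℝ → V) (P : ℝ → W) (B' : ℝ → V)
    (hB' : ∀ t ∈ Set.Ioc (0:ℝ) T, HasDerivAt B (B' t) t)
    (hBcont : ContinuousOn B (Set.Icc (0:ℝ) T))
    (hmem : ∀ t ∈ Set.Ioc (0:ℝ) T,
      u t ∈ Vhc ∧ ω t ∈ Vhc ∧ j t ∈ Vhc ∧ E t ∈ Vhc ∧ H t ∈ Vhc ∧
      B t ∈ Vhd ∧ P t ∈ Wh)
    (heq3 : ∀ t ∈ Set.Ioc (0:ℝ) T, ∀ Ch ∈ Vhd,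
      ⟪B' t, Ch⟫ + ⟪curl (E t), Ch⟫ = 0)
    (B0 : V) (hBinit : B 0 = proj B0) :
    (∀ t ∈ Set.Ioc (0:ℝ) T, B' t = -(curl (E t))) ∧
    (∀ t ∈ Set.Icc (0:ℝ) T, dvg (B t) = 0) := by
  have hcurlE : ∀ t ∈ Ioc 0 T, curl (E t) ∈ Vhd := fun t ht => hseq _ (hmem t ht).2.2.2.1
  have faraday : ∀ t ∈ Ioc 0 T, B' t = -curl (E t) := by
    intro t ht
    have hB't : B' t ∈ Vhd.topologicalClosure :=
      Submodule.mem_of_hasDerivWithinAt Vhd.isClosed_topologicalClosure (hB' t ht).hasDerivWithinAt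
        (uniqueDiffOn_Ioc 0 T t ht) ht
        fun s hs => Vhd.le_topologicalClosure (hmem s hs).2.2.2.2.2.1
    refine eq_neg_of_add_eq_zero_left
      (Vhd.eq_zero_of_mem_topologicalClosure_of_inner_eq_zero
        (add_mem hB't (Vhd.le_topologicalClosure (hcurlE t ht))) fun Ch hCh => ?_)
    rw [inner_add_left]
    exact heq3 t ht Ch hCh
  refine ⟨faraday, fun t ht => ?_⟩
  set K := Vhd ⊓ LinearMap.ker dvg
  have hprojK : ∀ v, proj v ∈ K := fun v => (hproj v).1
  have hBK : B t ∈ K.topologicalClosure :=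
    Submodule.mem_of_forall_hasDerivAt_mem K.isClosed_topologicalClosure hBcont hB'
      (fun s hs => K.le_topologicalClosure <| by
        rw [faraday s hs]
        exact neg_mem ⟨hcurlE s hs, hdivcurl _⟩)
      (hBinit ▸ K.le_topologicalClosure (hprojK B0)) t ht
  have hBproj : B t - proj (B t) = 0 :=
    K.eq_zero_of_mem_topologicalClosure_of_inner_eq_zero
      (sub_mem hBK (K.le_topologicalClosure (hprojK _))) fun C hC => (hproj (B t)).2 C hC.1 hC.2
  rw [sub_eq_zero.1 hBproj]
  exact (hproj _).1.2

theorem stmt12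
    {V W Z : Type*} [NormedAddCommGroup V] [InnerProductSpace ℝ V]
    [NormedAddCommGroup W] [InnerProductSpace ℝ W]
    [AddCommGroup Z] [Module ℝ Z]
    (curl : V →ₗ[ℝ] V) (grad : W →ₗ[ℝ] V) (dvg : V →ₗ[ℝ] Z) (cross : V → V → V)
    (Vhc Vhd : Submodule ℝ V) (Wh : Submodule ℝ W)
    (hseq : ∀ vh ∈ Vhc, curl vh ∈ Vhd)
    (hdivcurl : ∀ v : V, dvg (curl v) = 0)
    (proj : V → V)
    (hproj : ∀ Bv : V, (proj Bv ∈ Vhd ∧ dvg (proj Bv) = 0) ∧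
      ∀ Ch ∈ Vhd, dvg Ch = 0 → ⟪Bv - proj Bv, Ch⟫ = 0)
    (T Re Rm sc μ : ℝ) (hT : 0 < T) (hRe : 0 < Re) (hRm : 0 < Rm)
    (hsc : 0 < sc) (hμ : 0 < μ)
    (f : ℝ → V)
    (u ω j E H B : ℝ → V) (P : ℝ → W) (u' B' : ℝ → V)
    (hu' : ∀ t ∈ Set.Ioc (0:ℝ) T, HasDerivAt u (u' t) t)
    (hB' : ∀ t ∈ Set.Ioc (0:ℝ) T, HasDerivAt B (B' t) t)
    (hBcont : ContinuousOn B (Set.Icc (0:ℝ) T))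
    (hmem : ∀ t ∈ Set.Ioc (0:ℝ) T,
      u t ∈ Vhc ∧ ω t ∈ Vhc ∧ j t ∈ Vhc ∧ E t ∈ Vhc ∧ H t ∈ Vhc ∧
      B t ∈ Vhd ∧ P t ∈ Wh)
    (heq1 : ∀ t ∈ Set.Ioc (0:ℝ) T, ∀ v ∈ Vhc,
      ⟪u' t, v⟫ - ⟪cross (u t) (ω t), v⟫ + Re⁻¹ * ⟪curl (u t), curl v⟫
        - sc * ⟪cross (j t) (μ • H t), v⟫ + ⟪grad (P t), v⟫ = ⟪f t, v⟫)
    (heq2 : ∀ t ∈ Set.Ioc (0:ℝ) T, ∀ kh ∈ Vhc,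
      μ * ⟪j t, kh⟫ - ⟪B t, curl kh⟫ = 0)
    (heq3 : ∀ t ∈ Set.Ioc (0:ℝ) T, ∀ Ch ∈ Vhd,
      ⟪B' t, Ch⟫ + ⟪curl (E t), Ch⟫ = 0)
    (heq4 : ∀ t ∈ Set.Ioc (0:ℝ) T, ∀ Gh ∈ Vhc,
      ⟪Rm⁻¹ • j t - (E t + cross (u t) (μ • H t)), Gh⟫ = 0)
    (heq5 : ∀ t ∈ Set.Ioc (0:ℝ) T, ∀ Qh' ∈ Wh, ⟪u t, grad Qh'⟫ = 0)
    (heq6 : ∀ t ∈ Set.Ioc (0:ℝ) T, ∀ mh ∈ Vhc,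
      ⟪ω t, mh⟫ - ⟪u t, curl mh⟫ = 0)
    (heq7 : ∀ t ∈ Set.Ioc (0:ℝ) T, ∀ Fh ∈ Vhc,
      ⟪B t, Fh⟫ - μ * ⟪H t, Fh⟫ = 0)
    -- initial magnetic datum: B_h(0) = Π̃_k^{0,RT} B⁰ with div B⁰ = 0
    (B0 : V) (hB0 : dvg B0 = 0) (hBinit : B 0 = proj B0) :
    (∀ t ∈ Set.Ioc (0:ℝ) T, B' t = -(curl (E t))) ∧
    (∀ t ∈ Set.Icc (0:ℝ) T, dvg (B t) = 0) :=
  stmt12_general curl dvg Vhc Vhd Wh hseq hdivcurl proj hproj T u ω j E H B P B' hB' hBcont hmem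
    heq3 B0 hBinit
end
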